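/- The condition number μ is unitarily and scale invariant: for every unitary matrix U ∈ U(n), every A ∈ ℂ^{n×n}, λ ∈ ℂ and nonzero v ∈ ℂ^n with A_{λ,v} invertible, the map (UAU^{-1})_{λ,Uv} is invertible and μ(UAU^{-1}, λ, Uv) = μ(A,λ,v); moreover, for every nonzero real number s, μ(sA, sλ, v) = μ(A,λ,v). -/

import Mathlib

/-!
A unitary `U` acts on `ℂ^n` as a linear isometry carrying `T_v` onto `T_{Uv}`, and
`(UAU⁻¹)_{λ,Uv}` is the conjugate of `A_{λ,v}` by the restriction of this isometry; conjugating by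
isometries preserves invertibility and the norm of the inverse. The Frobenius norm is unitarily
invariant because `‖A‖_F² = Re tr (Aᴴ A)`. Scaling `(A, λ)` by `s` scales `A_{λ,v}` by `s`, hence
its inverse by `s⁻¹`, while `‖sA‖_F = |s| ‖A‖_F`.
-/

noncomputable section

open Matrix Set

/-- `T_v`: the orthogonal complement of `v` in `ℂ^n`. -/
def Tv {n : ℕ} (v : EuclideanSpace ℂ (Fin n)) : Submodule ℂ (EuclideanSpace ℂ (Fin n)) :=
  (ℂ ∙ v)ᗮ

/-- The linear map `A_{λ,v} : T_v → T_v`, `x ↦ P_{v⊥}((A - λ·Id) x)`. -/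
def Alv {n : ℕ} (A : Matrix (Fin n) (Fin n) ℂ) (lam : ℂ) (v : EuclideanSpace ℂ (Fin n)) :
    Tv v →ₗ[ℂ] Tv v :=
  (Submodule.orthogonalProjectionOnto (Tv v)).toLinearMap ∘ₗ
    (Matrix.toEuclideanLin A - lam • LinearMap.id) ∘ₗ (Tv v).subtype

/-- `A_{λ,v}` as a continuous linear map. -/
def AlvC {n : ℕ} (A : Matrix (Fin n) (Fin n) ℂ) (lam : ℂ) (v : EuclideanSpace ℂ (Fin n)) :
    Tv v →L[ℂ] Tv v :=
  LinearMap.toContinuousLinearMap (Alv A lam v)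

/-- Frobenius norm of a complex matrix. -/
def frobNorm {n : ℕ} (A : Matrix (Fin n) (Fin n) ℂ) : ℝ :=
  Real.sqrt (∑ i, ∑ j, ‖A i j‖ ^ 2)

/-- The condition number `μ(A,λ,v) = ‖A‖_F ‖A_{λ,v}^{-1}‖`. -/
def mu {n : ℕ} (A : Matrix (Fin n) (Fin n) ℂ) (lam : ℂ) (v : EuclideanSpace ℂ (Fin n)) : ℝ :=
  frobNorm A * ‖(AlvC A lam v).inverse‖

/-- Fubini-Study (angular) distance. -/
def dP {n : ℕ} (v w : EuclideanSpace ℂ (Fin n)) : ℝ :=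
  Real.arccos (‖(inner ℂ v w : ℂ)‖ / (‖v‖ * ‖w‖))

/-- The distance on triples. -/
def distT {n : ℕ} (A : Matrix (Fin n) (Fin n) ℂ) (lam : ℂ) (v : EuclideanSpace ℂ (Fin n))
    (A' : Matrix (Fin n) (Fin n) ℂ) (lam' : ℂ) (v' : EuclideanSpace ℂ (Fin n)) : ℝ :=
  Real.sqrt ((frobNorm ((frobNorm A)⁻¹ • A - (frobNorm A')⁻¹ • A')) ^ 2 +
    ‖lam / (frobNorm A : ℂ) - lam' / (frobNorm A' : ℂ)‖ ^ 2 + dP v v' ^ 2)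

section InverseNorm

variable {𝕜 E F : Type*} [NontriviallyNormedField 𝕜] [NormedAddCommGroup E] [NormedSpace 𝕜 E]
  [NormedAddCommGroup F] [NormedSpace 𝕜 F]

theorem ContinuousLinearMap.norm_inverse_conj_linearIsometryEquiv (e : E ≃ₗᵢ[𝕜] F)
    (T : E →L[𝕜] E) :
    ‖((e.toContinuousLinearEquiv : E →L[𝕜] F) ∘L T ∘L
      (e.toContinuousLinearEquiv.symm : F →L[𝕜] E)).inverse‖ = ‖T.inverse‖ := by
  rw [inverse_equiv_comp, inverse_comp_equiv, ContinuousLinearEquiv.symm_symm]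
  exact (opNorm_comp_linearIsometryEquiv _ e.symm).trans (opNorm_linearIsometryEquiv_comp e _)

theorem ContinuousLinearMap.norm_inverse_smul {c : 𝕜} (hc : c ≠ 0) (T : E →L[𝕜] E) :
    ‖(c • T).inverse‖ = ‖c‖⁻¹ * ‖T.inverse‖ := by
  set m : E ≃L[𝕜] E := ContinuousLinearEquiv.smulLeft (Units.mk0 c hc)
  have hT : c • T = (m : E →L[𝕜] E) ∘L T := by
    ext
    simp [m]
  have hm : (m.symm : E →L[𝕜] E) = c⁻¹ • ContinuousLinearMap.id 𝕜 E := by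
    ext
    rfl
  rw [hT, inverse_equiv_comp, hm, comp_smul, comp_id, norm_smul, norm_inv]

end InverseNorm

namespace Matrix.UnitaryGroup

variable {𝕜 ι : Type*} [RCLike 𝕜] [Fintype ι] [DecidableEq ι]

def toLinearIsometryEquiv (U : unitaryGroup ι 𝕜) :
    EuclideanSpace 𝕜 ι ≃ₗᵢ[𝕜] EuclideanSpace 𝕜 ι :=
  Unitary.linearIsometryEquiv ⟨toEuclideanCLM (n := ι) (𝕜 := 𝕜) U, Unitary.map_mem _ U.2⟩

theorem toLinearIsometryEquiv_apply (U : unitaryGroup ι 𝕜) (x : EuclideanSpace 𝕜 ι) :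
    toLinearIsometryEquiv U x = toEuclideanLin U.1 x :=
  rfl

theorem toLinearIsometryEquiv_symm_apply (U : unitaryGroup ι 𝕜) (x : EuclideanSpace 𝕜 ι) :
    (toLinearIsometryEquiv U).symm x = toEuclideanLin U.1⁻¹ x := by
  rw [inv_eq_left_inv (star_mul_self U)]
  change (star (toEuclideanCLM (n := ι) (𝕜 := 𝕜) U.1)) x = _
  rw [← StarHomClass.map_star]
  rfl

theorem toEuclideanLin_conj_apply (U : unitaryGroup ι 𝕜) (A : Matrix ι ι 𝕜)
    (x : EuclideanSpace 𝕜 ι) :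
    toEuclideanLin (U.1 * A * U.1⁻¹) x =
      toLinearIsometryEquiv U (toEuclideanLin A ((toLinearIsometryEquiv U).symm x)) := by
  simp [toLinearIsometryEquiv_apply, toLinearIsometryEquiv_symm_apply, toLpLin_apply,
    mulVec_mulVec, mul_assoc]

end Matrix.UnitaryGroup

section FrobeniusNorm

variable {n : ℕ}

theorem frobNorm_eq_sqrt_re_trace (A : Matrix (Fin n) (Fin n) ℂ) :
    frobNorm A = √(trace (Aᴴ * A)).re := by
  simp only [frobNorm, trace, diag_apply, mul_apply, conjTranspose_apply, Complex.re_sum]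
  rw [Finset.sum_comm]
  simp [← Complex.normSq_eq_norm_sq, Complex.normSq_apply]

theorem frobNorm_smul (c : ℂ) (A : Matrix (Fin n) (Fin n) ℂ) :
    frobNorm (c • A) = ‖c‖ * frobNorm A := by
  simp only [frobNorm, Matrix.smul_apply, smul_eq_mul, norm_mul, mul_pow, ← Finset.mul_sum]
  rw [Real.sqrt_mul (sq_nonneg _), Real.sqrt_sq (norm_nonneg _)]

theorem frobNorm_unitary_conj (U : unitaryGroup (Fin n) ℂ) (A : Matrix (Fin n) (Fin n) ℂ) :
    frobNorm (U.1 * A * U.1⁻¹) = frobNorm A := by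
  have hinv : U.1⁻¹ = star U.1 := inv_eq_left_inv (UnitaryGroup.star_mul_self U)
  have hgram : (U.1 * A * U.1⁻¹)ᴴ * (U.1 * A * U.1⁻¹) = U.1 * (Aᴴ * A) * U.1⁻¹ := by
    simp only [hinv, ← star_eq_conjTranspose, star_mul, star_star, mul_assoc]
    rw [← mul_assoc (star U.1) U.1, UnitaryGroup.star_mul_self, one_mul]
  rw [frobNorm_eq_sqrt_re_trace, frobNorm_eq_sqrt_re_trace, hgram,
    trace_conj ((isUnit_iff_isUnit_det _).mpr (UnitaryGroup.det_isUnit U))]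

end FrobeniusNorm

section Compression

variable {n : ℕ}

theorem map_Tv (f : EuclideanSpace ℂ (Fin n) ≃ₗᵢ[ℂ] EuclideanSpace ℂ (Fin n))
    (v : EuclideanSpace ℂ (Fin n)) :
    (Tv v).map (f.toLinearEquiv : EuclideanSpace ℂ (Fin n) →ₗ[ℂ] _) = Tv (f v) := by
  rw [Tv, Tv, Submodule.map_orthogonal_equiv, Submodule.map_span, Set.image_singleton]
  rfl

def tvIsometryEquiv (f : EuclideanSpace ℂ (Fin n) ≃ₗᵢ[ℂ] EuclideanSpace ℂ (Fin n))
    (v : EuclideanSpace ℂ (Fin n)) : Tv v ≃ₗᵢ[ℂ] Tv (f v) :=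
  (f.submoduleMap (Tv v)).trans (LinearIsometryEquiv.ofEq _ _ (map_Tv f v))

theorem coe_tvIsometryEquiv_apply (f : EuclideanSpace ℂ (Fin n) ≃ₗᵢ[ℂ] EuclideanSpace ℂ (Fin n))
    (v : EuclideanSpace ℂ (Fin n)) (x : Tv v) :
    (tvIsometryEquiv f v x : EuclideanSpace ℂ (Fin n)) = f x :=
  rfl

theorem coe_tvIsometryEquiv_symm_apply
    (f : EuclideanSpace ℂ (Fin n) ≃ₗᵢ[ℂ] EuclideanSpace ℂ (Fin n))
    (v : EuclideanSpace ℂ (Fin n)) (x : Tv (f v)) :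
    ((tvIsometryEquiv f v).symm x : EuclideanSpace ℂ (Fin n)) = f.symm x := by
  rw [← f.symm_apply_apply ((tvIsometryEquiv f v).symm x : EuclideanSpace ℂ (Fin n)),
    ← coe_tvIsometryEquiv_apply, LinearIsometryEquiv.apply_symm_apply]

theorem starProjection_Tv_map (f : EuclideanSpace ℂ (Fin n) ≃ₗᵢ[ℂ] EuclideanSpace ℂ (Fin n))
    (v x : EuclideanSpace ℂ (Fin n)) :
    (Tv (f v)).starProjection x = f ((Tv v).starProjection (f.symm x)) := by
  rw [← map_Tv]
  exact Submodule.starProjection_map_apply f (Tv v) x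

theorem AlvC_conj (f : EuclideanSpace ℂ (Fin n) ≃ₗᵢ[ℂ] EuclideanSpace ℂ (Fin n))
    {A B : Matrix (Fin n) (Fin n) ℂ}
    (hB : ∀ x, toEuclideanLin B x = f (toEuclideanLin A (f.symm x)))
    (lam : ℂ) (v : EuclideanSpace ℂ (Fin n)) :
    AlvC B lam (f v) =
      ((tvIsometryEquiv f v).toContinuousLinearEquiv : Tv v →L[ℂ] Tv (f v)) ∘L AlvC A lam v ∘L
        ((tvIsometryEquiv f v).toContinuousLinearEquiv.symm : Tv (f v) →L[ℂ] Tv v) := by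
  set shift : Matrix (Fin n) (Fin n) ℂ → EuclideanSpace ℂ (Fin n) →ₗ[ℂ] _ :=
    fun M ↦ toEuclideanLin M - lam • LinearMap.id
  have hshift : ∀ x, f.symm (shift B x) = shift A (f.symm x) := by
    simp [shift, hB]
  refine ContinuousLinearMap.ext fun x => Subtype.ext ?_
  change (Tv (f v)).starProjection (shift B x) =
    f ((Tv v).starProjection (shift A ((tvIsometryEquiv f v).symm x)))
  rw [starProjection_Tv_map, hshift, coe_tvIsometryEquiv_symm_apply]

theorem AlvC_smul (c : ℂ) (A : Matrix (Fin n) (Fin n) ℂ) (lam : ℂ)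
    (v : EuclideanSpace ℂ (Fin n)) :
    AlvC (c • A) (c * lam) v = c • AlvC A lam v := by
  ext x
  simp [AlvC, Alv, mul_smul, smul_sub]

end Compression

theorem mu_unitary_and_scale_invariant_general {n : ℕ} (A : Matrix (Fin n) (Fin n) ℂ)
    (lam : ℂ) (v : EuclideanSpace ℂ (Fin n))
    (hinv : Function.Bijective (Alv A lam v)) :
    (∀ U : Matrix (Fin n) (Fin n) ℂ, U ∈ Matrix.unitaryGroup (Fin n) ℂ →
      Function.Bijective (Alv (U * A * U⁻¹) lam (Matrix.toEuclideanLin U v)) ∧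
        mu (U * A * U⁻¹) lam (Matrix.toEuclideanLin U v) = mu A lam v) ∧
    ∀ s : ℝ, s ≠ 0 → mu (s • A) (s * lam) v = mu A lam v := by
  refine ⟨fun U hU => ?_, fun s hs => ?_⟩
  · set f := UnitaryGroup.toLinearIsometryEquiv ⟨U, hU⟩
    have hconj := AlvC_conj f (UnitaryGroup.toEuclideanLin_conj_apply ⟨U, hU⟩ A) lam v
    refine ⟨?_, ?_⟩
    · change Function.Bijective (AlvC (U * A * U⁻¹) lam (f v))
      rw [hconj]
      exact ((tvIsometryEquiv f v).bijective.comp hinv).comp (tvIsometryEquiv f v).symm.bijective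
    · change mu (U * A * U⁻¹) lam (f v) = mu A lam v
      rw [mu, mu, hconj, ContinuousLinearMap.norm_inverse_conj_linearIsometryEquiv,
        frobNorm_unitary_conj ⟨U, hU⟩]
  · have hs' : (s : ℂ) ≠ 0 := Complex.ofReal_ne_zero.mpr hs
    rw [mu, mu, ← Complex.coe_smul, AlvC_smul, ContinuousLinearMap.norm_inverse_smul hs',
      frobNorm_smul]
    field_simp

/-- Remark: `μ` is invariant under unitary conjugation and under real scaling
`(A,λ) ↦ (sA, sλ)`. -/
theorem mu_unitary_and_scale_invariant {n : ℕ} (A : Matrix (Fin n) (Fin n) ℂ)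
    (lam : ℂ) (v : EuclideanSpace ℂ (Fin n)) (hv : v ≠ 0)
    (hinv : Function.Bijective (Alv A lam v)) :
    (∀ U : Matrix (Fin n) (Fin n) ℂ, U ∈ Matrix.unitaryGroup (Fin n) ℂ →
      Function.Bijective (Alv (U * A * U⁻¹) lam (Matrix.toEuclideanLin U v)) ∧
        mu (U * A * U⁻¹) lam (Matrix.toEuclideanLin U v) = mu A lam v) ∧
    ∀ s : ℝ, s ≠ 0 → mu (s • A) (s * lam) v = mu A lam v :=
  mu_unitary_and_scale_invariant_general A lam v hinv
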